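/- Let d denote the sumset-divisor counting function on finite subsets of ℕ. For any 1 ≤ j ≤ k, (j+1)·d({0,...,k-j}) ≤ 2·d({0,...,k-1}), with equality if and only if j = 1, or (k = 3 and j = 2). -/

import Mathlib

/-!
Write `d n` for the number of divisors of `[0, n)`. If `[0, n) = B + C` then also
`[0, n) = B + [0, max C]`, so the divisors are the sets `B` with `[0, n) = B + [0, t)` for some `t`.
For such `B` and `k ≤ t`, the set `{0} ∪ (B + k)` divides `[0, n + k)`. With `k = 1` this is a
bijection onto the divisors of `[0, n + 1)` containing `1`, so `d (n + 1) = d n + u (n + 1)`, where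
`u` counts the divisors avoiding `1`; with `k = 2` it injects the divisors of `[0, n)` other than
`[0, n)` into those of `[0, n + 2)` avoiding `1` and different from `{0}`, so `d n ≤ u (n + 2)`;
and `{0} ∪ [2, n - 1]` divides `[0, n + 1)` but not `[0, n)`, so `u` is strictly increasing from
`n = 3` on. Together, `2 d n < d (n + 2)` and, for `n ≥ 3`, `3 d n < 2 d (n + 1)`. These give the
strict inequality for `j = 2`, `k ≥ 4` and, by induction on `j` in steps of two, for all `j ≥ 3`;
what is left are the values `d 1, d 2, d 3 = 1, 2, 3`.
-/

open Pointwise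

/-- The number of sumset divisors of a finite set of naturals. -/
noncomputable def numDivisors (A : Finset ℕ) : ℕ :=
  {B : Finset ℕ | ∃ C : Finset ℕ, A = B + C}.ncard

open Finset

namespace RangeDivisors

theorem range_eq_add_range_iff {B : Finset ℕ} {n t : ℕ} :
    range n = B + range t ↔
      (∀ b ∈ B, ∀ c < t, b + c < n) ∧ ∀ x < n, ∃ b ∈ B, b ≤ x ∧ x < b + t := by
  constructor
  · intro h
    refine ⟨fun b hb c hc => ?_, fun x hx => ?_⟩
    · have hbc := add_mem_add hb (mem_range.2 hc)
      rwa [← h, mem_range] at hbc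
    · obtain ⟨b, hb, c, hc, rfl⟩ := mem_add.1 (h ▸ mem_range.2 hx)
      exact ⟨b, hb, by omega, by simp at hc; omega⟩
  · rintro ⟨hlt, hcover⟩
    ext x
    simp only [mem_range, mem_add]
    constructor
    · intro hx
      obtain ⟨b, hb, hbx, hxb⟩ := hcover x hx
      exact ⟨b, hb, x - b, by omega, by omega⟩
    · rintro ⟨b, hb, c, hc, rfl⟩
      exact hlt b hb c hc

theorem zero_mem_of_range_eq_add_range {B : Finset ℕ} {n t : ℕ} (hn : 0 < n)
    (h : range n = B + range t) : 0 ∈ B := by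
  obtain ⟨b, hb, hb0, -⟩ := (range_eq_add_range_iff.1 h).2 0 hn
  rwa [Nat.le_zero.1 hb0] at hb

theorem exists_range_eq_add_iff {B : Finset ℕ} {n : ℕ} (hn : 0 < n) :
    (∃ C, range n = B + C) ↔ ∃ t, range n = B + range t := by
  refine ⟨fun ⟨C, hC⟩ => ?_, fun ⟨t, ht⟩ => ⟨_, ht⟩⟩
  have hC₀ : C.Nonempty := (hC ▸ nonempty_range_iff.2 hn.ne').of_add_right
  have hmax (b) (hb : b ∈ B) : b + C.max' hC₀ < n := by
    have hbc := add_mem_add hb (C.max'_mem hC₀)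
    rwa [← hC, mem_range] at hbc
  refine ⟨C.max' hC₀ + 1, range_eq_add_range_iff.2 ⟨fun b hb c hc => ?_, fun x hx => ?_⟩⟩
  · have := hmax b hb
    omega
  · obtain ⟨b, hb, c, hc, rfl⟩ := mem_add.1 (hC ▸ mem_range.2 hx)
    have := C.le_max' c hc
    exact ⟨b, hb, by omega, by omega⟩

theorem pos_of_range_eq_add_range {B : Finset ℕ} {n t : ℕ} (hn : 0 < n)
    (h : range n = B + range t) : 0 < t := by
  obtain ⟨b, -, hb0, hbt⟩ := (range_eq_add_range_iff.1 h).2 0 hn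
  omega

theorem le_of_range_eq_add_range {B : Finset ℕ} {n t : ℕ} (hn : 0 < n)
    (h : range n = B + range t) : t ≤ n := by
  have := (range_eq_add_range_iff.1 h).1 0 (zero_mem_of_range_eq_add_range hn h) (t - 1)
    (by have := pos_of_range_eq_add_range hn h; omega)
  omega

-- The bound `t ≤ n` holds automatically once `n > 0`; it is there to make membership decidable.
def rangeDivisors (n : ℕ) : Finset (Finset ℕ) :=
  (range n).powerset.filter fun B => ∃ t ≤ n, range n = B + range t

def rangeDivisorsWithoutOne (n : ℕ) : Finset (Finset ℕ) :=
  (rangeDivisors n).filter (1 ∉ ·)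

theorem mem_rangeDivisors {B : Finset ℕ} {n : ℕ} (hn : 0 < n) :
    B ∈ rangeDivisors n ↔ ∃ t, range n = B + range t := by
  simp only [rangeDivisors, mem_filter, mem_powerset]
  refine ⟨fun ⟨_, t, _, ht⟩ => ⟨t, ht⟩, fun ⟨t, ht⟩ => ⟨?_, t, ?_, ht⟩⟩
  · exact fun b hb => mem_range.2
      ((range_eq_add_range_iff.1 ht).1 b hb 0 (pos_of_range_eq_add_range hn ht))
  · exact le_of_range_eq_add_range hn ht

theorem numDivisors_range {n : ℕ} (hn : 0 < n) :
    numDivisors (range n) = #(rangeDivisors n) := by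
  rw [numDivisors, ← Set.ncard_coe_finset]
  congr 1
  ext B
  rw [mem_coe, mem_rangeDivisors hn, Set.mem_ofPred_eq, exists_range_eq_add_iff hn]

def shift (k : ℕ) (B : Finset ℕ) : Finset ℕ :=
  insert 0 (B.image (· + k))

theorem mem_shift {k a : ℕ} {B : Finset ℕ} : a ∈ shift k B ↔ a = 0 ∨ ∃ b ∈ B, b + k = a := by
  simp [shift]

theorem add_mem_shift_iff {k b : ℕ} {B : Finset ℕ} (hk : 0 < k) : b + k ∈ shift k B ↔ b ∈ B := by
  simp only [shift, mem_insert, mem_image, add_left_inj, exists_eq_right]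
  exact or_iff_right (by omega)

theorem shift_injective {k : ℕ} (hk : 0 < k) : Function.Injective (shift k) := fun X Y h =>
  ext fun b => by rw [← add_mem_shift_iff hk, h, add_mem_shift_iff hk]

theorem range_add_eq_shift_add_range {B : Finset ℕ} {n t k : ℕ} (hn : 0 < n)
    (h : range n = B + range t) (hk : k ≤ t) : range (n + k) = shift k B + range t := by
  obtain ⟨hlt, hcover⟩ := range_eq_add_range_iff.1 h
  have htn := le_of_range_eq_add_range hn h
  refine range_eq_add_range_iff.2 ⟨fun b' hb' c hc => ?_, fun x hx => ?_⟩
  · obtain rfl | ⟨b, hb, rfl⟩ := mem_shift.1 hb'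
    · omega
    · have := hlt b hb c hc
      omega
  · by_cases hxk : x < k
    · exact ⟨0, mem_insert_self _ _, by omega, by omega⟩
    · obtain ⟨b, hb, hbx, hxb⟩ := hcover (x - k) (by omega)
      exact ⟨b + k, mem_shift.2 (.inr ⟨b, hb, rfl⟩), by omega, by omega⟩

noncomputable def unshift (B : Finset ℕ) : Finset ℕ :=
  B.preimage (· + 1) (add_left_injective 1).injOn

theorem mem_unshift {a : ℕ} {B : Finset ℕ} : a ∈ unshift B ↔ a + 1 ∈ B :=
  mem_preimage

theorem unshift_shift_one (B : Finset ℕ) : unshift (shift 1 B) = B :=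
  ext fun _ => by rw [mem_unshift, add_mem_shift_iff one_pos]

theorem shift_one_unshift {B : Finset ℕ} (h₀ : 0 ∈ B) : shift 1 (unshift B) = B := by
  ext (_ | a)
  · simpa [shift] using h₀
  · rw [add_mem_shift_iff one_pos, mem_unshift]

theorem range_eq_unshift_add_range {B : Finset ℕ} {n t : ℕ} (h : range (n + 1) = B + range t)
    (h₁ : 1 ∈ B) : range n = unshift B + range t := by
  obtain ⟨hlt, hcover⟩ := range_eq_add_range_iff.1 h
  refine range_eq_add_range_iff.2 ⟨fun a ha c hc => ?_, fun x hx => ?_⟩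
  · have := hlt _ (mem_unshift.1 ha) c hc
    omega
  · obtain ⟨b, hb, hbx, hxb⟩ := hcover (x + 1) (by omega)
    rcases Nat.eq_zero_or_pos b with rfl | hb₀
    · exact ⟨0, mem_unshift.2 h₁, by omega, by omega⟩
    · refine ⟨b - 1, mem_unshift.2 ?_, by omega, by omega⟩
      rwa [Nat.sub_add_cancel hb₀]

theorem card_rangeDivisors_succ {n : ℕ} (hn : 0 < n) :
    #(rangeDivisors (n + 1)) = #(rangeDivisors n) + #(rangeDivisorsWithoutOne (n + 1)) := by
  rw [rangeDivisorsWithoutOne, ← card_filter_add_card_filter_not (1 ∈ ·)]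
  congr 1
  refine (card_nbij' (shift 1) unshift (fun B hB => ?_) (fun B hB => ?_)
    (fun B _ => unshift_shift_one B) (fun B hB => ?_)).symm
  · obtain ⟨t, ht⟩ := (mem_rangeDivisors hn).1 hB
    have ht₁ : 1 ≤ t := pos_of_range_eq_add_range hn ht
    refine mem_filter.2 ⟨(mem_rangeDivisors n.succ_pos).2 ⟨t, ?_⟩, ?_⟩
    · exact range_add_eq_shift_add_range hn ht ht₁
    · exact (add_mem_shift_iff one_pos).2 (zero_mem_of_range_eq_add_range hn ht)
  · obtain ⟨hB, h₁⟩ := mem_filter.1 hB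
    obtain ⟨t, ht⟩ := (mem_rangeDivisors n.succ_pos).1 hB
    exact (mem_rangeDivisors hn).2 ⟨t, range_eq_unshift_add_range ht h₁⟩
  · obtain ⟨t, ht⟩ := (mem_rangeDivisors n.succ_pos).1 (mem_filter.1 hB).1
    exact shift_one_unshift (zero_mem_of_range_eq_add_range n.succ_pos ht)

theorem range_mem_rangeDivisors {n : ℕ} (hn : 0 < n) : range n ∈ rangeDivisors n :=
  (mem_rangeDivisors hn).2 ⟨1, by rw [range_one, singleton_zero, add_zero]⟩

theorem singleton_zero_mem_rangeDivisorsWithoutOne {n : ℕ} (hn : 0 < n) :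
    {0} ∈ rangeDivisorsWithoutOne n :=
  mem_filter.2 ⟨(mem_rangeDivisors hn).2 ⟨n, by rw [singleton_zero, zero_add]⟩, by simp⟩

theorem card_rangeDivisors_le_card_rangeDivisorsWithoutOne_add_two {n : ℕ} (hn : 0 < n) :
    #(rangeDivisors n) ≤ #(rangeDivisorsWithoutOne (n + 2)) := by
  have hmaps : Set.MapsTo (shift 2) ((rangeDivisors n).erase (range n))
      ((rangeDivisorsWithoutOne (n + 2)).erase {0}) := by
    intro B hB
    obtain ⟨hne, hB⟩ := mem_erase.1 hB
    obtain ⟨t, ht⟩ := (mem_rangeDivisors hn).1 hB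
    have ht₂ : 2 ≤ t := by
      by_contra! h
      obtain rfl : t = 1 := by have := pos_of_range_eq_add_range hn ht; omega
      rw [range_one, singleton_zero, add_zero] at ht
      exact hne ht.symm
    have h₂ : 0 + 2 ∈ shift 2 B :=
      (add_mem_shift_iff two_pos).2 (zero_mem_of_range_eq_add_range hn ht)
    refine mem_erase.2 ⟨fun h => by simp [h] at h₂, mem_filter.2 ⟨?_, ?_⟩⟩
    · exact (mem_rangeDivisors (by omega)).2 ⟨t, range_add_eq_shift_add_range hn ht ht₂⟩
    · simp [shift]
  have hcard := card_le_card_of_injOn (shift 2) hmaps (shift_injective two_pos).injOn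
  rw [card_erase_of_mem (range_mem_rangeDivisors hn),
    card_erase_of_mem (singleton_zero_mem_rangeDivisorsWithoutOne (by omega))] at hcard
  have := card_pos.2 ⟨_, range_mem_rangeDivisors hn⟩
  have := card_pos.2 ⟨_, singleton_zero_mem_rangeDivisorsWithoutOne (n := n + 2) (by omega)⟩
  omega

theorem range_add_one_eq_add_range_add_one {B : Finset ℕ} {n t : ℕ} (hn : 0 < n)
    (h : range n = B + range t) : range (n + 1) = B + range (t + 1) := by
  obtain ⟨hlt, hcover⟩ := range_eq_add_range_iff.1 h
  have ht := pos_of_range_eq_add_range hn h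
  refine range_eq_add_range_iff.2 ⟨fun b hb c hc => ?_, fun x hx => ?_⟩
  · have := hlt b hb (t - 1) (by omega)
    omega
  · obtain ⟨b, hb, hbx, hxb⟩ := hcover (min x (n - 1)) (by omega)
    exact ⟨b, hb, by omega, by omega⟩

theorem rangeDivisors_subset_succ {n : ℕ} (hn : 0 < n) :
    rangeDivisors n ⊆ rangeDivisors (n + 1) := fun _ hB =>
  have ⟨t, ht⟩ := (mem_rangeDivisors hn).1 hB
  (mem_rangeDivisors n.succ_pos).2 ⟨t + 1, range_add_one_eq_add_range_add_one hn ht⟩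

theorem insert_zero_Icc_mem_rangeDivisorsWithoutOne {n : ℕ} (hn : 3 ≤ n) :
    insert 0 (Icc 2 (n - 1)) ∈ rangeDivisorsWithoutOne (n + 1) := by
  refine mem_filter.2 ⟨(mem_rangeDivisors n.succ_pos).2 ⟨2, range_eq_add_range_iff.2
    ⟨fun b hb c hc => ?_, fun x hx => ?_⟩⟩, by simp⟩
  · simp only [mem_insert, mem_Icc] at hb
    omega
  · by_cases hx₂ : x < 2
    · exact ⟨0, mem_insert_self _ _, by omega, by omega⟩
    · exact ⟨min x (n - 1), by simp only [mem_insert, mem_Icc]; omega, by omega, by omega⟩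

theorem insert_zero_Icc_notMem_rangeDivisors {n : ℕ} (hn : 3 ≤ n) :
    insert 0 (Icc 2 (n - 1)) ∉ rangeDivisors n := by
  rw [mem_rangeDivisors (by omega)]
  rintro ⟨t, ht⟩
  obtain ⟨hlt, hcover⟩ := range_eq_add_range_iff.1 ht
  obtain ⟨b, hb, hb₁, h₁b⟩ := hcover 1 (by omega)
  simp only [mem_insert, mem_Icc] at hb
  have := hlt (n - 1) (by simp only [mem_insert, mem_Icc]; omega) 1 (by omega)
  omega

theorem card_rangeDivisorsWithoutOne_lt_succ {n : ℕ} (hn : 3 ≤ n) :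
    #(rangeDivisorsWithoutOne n) < #(rangeDivisorsWithoutOne (n + 1)) := by
  refine card_lt_card <| (ssubset_iff_of_subset <|
    filter_subset_filter _ (rangeDivisors_subset_succ (by omega))).2 ⟨_,
      insert_zero_Icc_mem_rangeDivisorsWithoutOne hn, fun h => ?_⟩
  exact insert_zero_Icc_notMem_rangeDivisors hn (mem_filter.1 h).1

theorem three_mul_card_lt_two_mul_card_succ {n : ℕ} (hn : 3 ≤ n) :
    3 * #(rangeDivisors n) < 2 * #(rangeDivisors (n + 1)) := by
  obtain ⟨m, rfl⟩ : ∃ m, n = m + 1 := ⟨n - 1, by omega⟩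
  have h₁ : #(rangeDivisors (m + 2)) = #(rangeDivisors (m + 1)) +
      #(rangeDivisorsWithoutOne (m + 2)) := card_rangeDivisors_succ (by omega)
  have h₂ := card_rangeDivisors_succ (n := m) (by omega)
  have h₃ := card_rangeDivisors_le_card_rangeDivisorsWithoutOne_add_two (n := m) (by omega)
  have h₄ : #(rangeDivisorsWithoutOne (m + 1)) < #(rangeDivisorsWithoutOne (m + 2)) :=
    card_rangeDivisorsWithoutOne_lt_succ hn
  show 3 * #(rangeDivisors (m + 1)) < 2 * #(rangeDivisors (m + 2))
  omega

theorem two_mul_card_lt_card_add_two {n : ℕ} (hn : 0 < n) :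
    2 * #(rangeDivisors n) < #(rangeDivisors (n + 2)) := by
  have h₁ : #(rangeDivisors (n + 2)) = #(rangeDivisors (n + 1)) +
      #(rangeDivisorsWithoutOne (n + 2)) := card_rangeDivisors_succ (by omega)
  have h₂ := card_rangeDivisors_succ hn
  have h₃ := card_rangeDivisors_le_card_rangeDivisorsWithoutOne_add_two hn
  have h₄ := card_pos.2 ⟨_, singleton_zero_mem_rangeDivisorsWithoutOne (n := n + 1) (by omega)⟩
  omega

theorem mul_card_lt_two_mul_card_add : ∀ (i : ℕ) {m : ℕ}, 0 < m →
    (i + 4) * #(rangeDivisors m) < 2 * #(rangeDivisors (m + i + 2))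
  | 0, m, hm => by
    have : 2 * #(rangeDivisors m) < #(rangeDivisors (m + 0 + 2)) := two_mul_card_lt_card_add_two hm
    omega
  | 1, m, hm => by
    have h₁ : 3 * #(rangeDivisors (m + 2)) < 2 * #(rangeDivisors (m + 1 + 2)) :=
      three_mul_card_lt_two_mul_card_succ (by omega)
    have h₂ := two_mul_card_lt_card_add_two hm
    omega
  | i + 2, m, hm => by
    have h₁ := mul_card_lt_two_mul_card_add i (m := m + 2) (by omega)
    have h₂ := two_mul_card_lt_card_add_two hm
    rw [show m + 2 + i + 2 = m + (i + 2) + 2 by omega] at h₁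
    nlinarith

end RangeDivisors

open RangeDivisors

theorem stmt13 (j k : ℕ) (hj : 1 ≤ j) (hjk : j ≤ k) :
    (j + 1) * numDivisors (Finset.range (k - j + 1)) ≤
        2 * numDivisors (Finset.range k) ∧
      ((j + 1) * numDivisors (Finset.range (k - j + 1)) =
          2 * numDivisors (Finset.range k) ↔ j = 1 ∨ (k = 3 ∧ j = 2)) := by
  rw [numDivisors_range (by omega), numDivisors_range (by omega)]
  obtain rfl | rfl | hj₃ : j = 1 ∨ j = 2 ∨ 3 ≤ j := by omega
  · simp [Nat.sub_add_cancel hjk]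
  · obtain rfl | rfl | hk₄ : k = 2 ∨ k = 3 ∨ 4 ≤ k := by omega
    · simp [show #(rangeDivisors 1) = 1 by decide, show #(rangeDivisors 2) = 2 by decide]
    · simp [show #(rangeDivisors 2) = 2 by decide, show #(rangeDivisors 3) = 3 by decide]
    · have := three_mul_card_lt_two_mul_card_succ (n := k - 1) (by omega)
      rw [Nat.sub_add_cancel (by omega : 1 ≤ k)] at this
      rw [show k - 2 + 1 = k - 1 by omega]
      omega
  · have := mul_card_lt_two_mul_card_add (j - 3) (m := k - j + 1) (by omega)
    rw [show j - 3 + 4 = j + 1 by omega, show k - j + 1 + (j - 3) + 2 = k by omega] at this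
    omega
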